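/- A graph G on n vertices is distance magic if and only if G is p-distance magic for every integer p ≥ 1. -/

import Mathlib

open Finset

/-- A graph `G` on `n` vertices is distance magic: there is a bijection assigning the
labels `1,…,n` (here `v ↦ f v + 1`) so that all vertex weights equal a constant. -/
def IsDistanceMagic {n : ℕ} (G : SimpleGraph (Fin n)) [DecidableRel G.Adj] : Prop :=
  ∃ f : Fin n ≃ Fin n, ∃ k : ℕ, ∀ v, ∑ u ∈ G.neighborFinset v, ((f u : ℕ) + 1) = k

/-- A graph `G` on `n` vertices is `p`-distance magic: there is a labeling whose multiset
of values is `{1,2,…,n}_p` (the reductions of `1,…,n` modulo `p`, with `0` replaced by `p`,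
i.e. the multiset `{(i % p) + 1 : i ∈ range n}`) such that all vertex weights are congruent
to one common value modulo `p`. -/
def IsPDistanceMagic {n : ℕ} (G : SimpleGraph (Fin n)) [DecidableRel G.Adj] (p : ℕ) : Prop :=
  ∃ f : Fin n → ℕ,
    Multiset.map f Finset.univ.val = (Multiset.range n).map (fun i => i % p + 1) ∧
    ∃ μ : ℕ, ∀ v, (∑ u ∈ G.neighborFinset v, f u) % p = μ % p

/-! Reducing a distance magic labeling modulo `p` gives a `p`-distance magic one. Conversely, for
`p > n²` the multiset `{1,…,n}_p` is just `{1,…,n}`, so a `p`-distance magic labeling is a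
bijection onto `{1,…,n}`; all its weights are below `n² < p`, so being congruent modulo `p` they
are equal. -/

lemma Fin.univ_val_map_val_equiv {n : ℕ} (e : Fin n ≃ Fin n) :
    univ.val.map (fun v => (e v : ℕ)) = Multiset.range n := by
  rw [← Function.comp_def Fin.val e, ← Multiset.map_map, Multiset.map_univ_val_equiv]
  simp only [Fin.univ_val_map, List.ofFn_eq_map, List.map_coe_finRange_eq_range]
  rfl

lemma Finset.sum_mod_add_one_mod {ι : Type*} (s : Finset ι) (g : ι → ℕ) (p : ℕ) :
    (∑ u ∈ s, (g u % p + 1)) % p = (∑ u ∈ s, (g u + 1)) % p := by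
  rw [← ZMod.natCast_eq_natCast_iff']
  push_cast
  simp only [ZMod.natCast_mod]

lemma Multiset.map_range_mod_add_one_of_le {n p : ℕ} (hnp : n ≤ p) :
    (Multiset.range n).map (fun i => i % p + 1) = (Multiset.range n).map (· + 1) :=
  Multiset.map_congr rfl fun i hi => by
    rw [Nat.mod_eq_of_lt (lt_of_lt_of_le (Multiset.mem_range.mp hi) hnp)]

lemma Fin.exists_equiv_add_one_eq_of_map_univ_eq {n : ℕ} {f : Fin n → ℕ}
    (hf : univ.val.map f = (Multiset.range n).map (· + 1)) :
    ∃ e : Fin n ≃ Fin n, ∀ v, (e v : ℕ) + 1 = f v := by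
  have hval : ∀ v, ∃ i < n, i + 1 = f v := fun v => by
    simpa [hf] using Multiset.mem_map_of_mem f (mem_univ_val v)
  choose g hg_lt hg using hval
  have hf_inj : Function.Injective f := fun a b hab =>
    Multiset.inj_on_of_nodup_map (hf ▸ (Multiset.nodup_range n).map (add_left_injective 1))
      a (mem_univ_val a) b (mem_univ_val b) hab
  have he_inj : Function.Injective fun v => (⟨g v, hg_lt v⟩ : Fin n) := fun a b hab =>
    hf_inj <| by rw [← hg a, ← hg b, Fin.mk.inj hab]
  exact ⟨Equiv.ofBijective _ (Finite.injective_iff_bijective.mp he_inj), hg⟩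

lemma Fin.sum_val_add_one_le {n : ℕ} (s : Finset (Fin n)) (e : Fin n → Fin n) :
    ∑ u ∈ s, ((e u : ℕ) + 1) ≤ n * n :=
  calc ∑ u ∈ s, ((e u : ℕ) + 1) ≤ s.card * n :=
        sum_le_card_nsmul s _ n fun u _ => (e u).isLt
    _ ≤ n * n := Nat.mul_le_mul_right n (by simpa using card_le_univ s)

section
variable {n : ℕ} {G : SimpleGraph (Fin n)} [DecidableRel G.Adj]

lemma IsDistanceMagic.isPDistanceMagic (h : IsDistanceMagic G) (p : ℕ) : IsPDistanceMagic G p := by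
  obtain ⟨e, k, hk⟩ := h
  refine ⟨fun v => (e v : ℕ) % p + 1, ?_, k, fun v => ?_⟩
  · rw [← Fin.univ_val_map_val_equiv e, Multiset.map_map]
    rfl
  · rw [← hk v]
    exact sum_mod_add_one_mod _ _ p

lemma IsPDistanceMagic.isDistanceMagic {p : ℕ} (h : IsPDistanceMagic G p) (hp : n * n < p) :
    IsDistanceMagic G := by
  obtain ⟨f, hf, μ, hμ⟩ := h
  rw [Multiset.map_range_mod_add_one_of_le ((Nat.le_mul_self n).trans hp.le)] at hf
  obtain ⟨e, he⟩ := Fin.exists_equiv_add_one_eq_of_map_univ_eq hf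
  refine ⟨e, μ % p, fun v => ?_⟩
  have hbound := (Fin.sum_val_add_one_le (G.neighborFinset v) e).trans_lt hp
  rw [← Nat.mod_eq_of_lt hbound, ← hμ v]
  simp only [he]

end

/-- A graph `G` on `n` vertices is distance magic if and only if it is
`p`-distance magic for every integer `p ≥ 1`. -/
theorem distance_magic_iff_all_p {n : ℕ} (G : SimpleGraph (Fin n)) [DecidableRel G.Adj] :
    IsDistanceMagic G ↔ ∀ p : ℕ, 1 ≤ p → IsPDistanceMagic G p :=
  ⟨fun h p _ => h.isPDistanceMagic p,
    fun h => (h (n * n + 1) (by omega)).isDistanceMagic (by omega)⟩
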